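/- Let (X,F,μ) and (Y,G,ν) be probability spaces and H = ∪ₙ (Aₙ×Bₙ) with Aₙ∈F, Bₙ∈G. If μ(limsupₙ Aₙ) = 0 or ν(limsupₙ Bₙ) = 0, then α(1_H) = β(1_H), where α(1_H)=inf{P(H): P∈Γ(μ,ν)} and β(1_H)=sup{μ(f)+ν(g): f∈L¹(μ), g∈L¹(ν), f(x)+g(y) ≤ 1_H(x,y)}. -/

import Mathlib

open MeasureTheory Filter Topology

noncomputable section

variable {X Y : Type*}

/-- `P` is a coupling of `μ` and `ν`: a probability measure on the product
σ-field with marginals `μ` and `ν`. -/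
def IsCoupling [MeasurableSpace X] [MeasurableSpace Y]
    (μ : Measure X) (ν : Measure Y) (P : Measure (X × Y)) : Prop :=
  IsProbabilityMeasure P ∧ P.map Prod.fst = μ ∧ P.map Prod.snd = ν

/-- Values `∫ c dP` as `P` ranges over the couplings of `μ` and `ν`. -/
def primalSet [MeasurableSpace X] [MeasurableSpace Y]
    (μ : Measure X) (ν : Measure Y) (c : X × Y → ℝ) : Set ℝ :=
  {r | ∃ P : Measure (X × Y), IsCoupling μ ν P ∧ r = ∫ z, c z ∂P}

/-- `α(c) = inf_{P ∈ Γ(μ,ν)} ∫ c dP`. -/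
def alphaInf [MeasurableSpace X] [MeasurableSpace Y]
    (μ : Measure X) (ν : Measure Y) (c : X × Y → ℝ) : ℝ :=
  sInf (primalSet μ ν c)

/-- `α*(c) = sup_{P ∈ Γ(μ,ν)} ∫ c dP`. -/
def alphaSup [MeasurableSpace X] [MeasurableSpace Y]
    (μ : Measure X) (ν : Measure Y) (c : X × Y → ℝ) : ℝ :=
  sSup (primalSet μ ν c)

/-- Values `μ(f) + ν(g)` with `f ∈ L¹(μ)`, `g ∈ L¹(ν)` and `f + g ≤ c` pointwise. -/
def dualLowerSet [MeasurableSpace X] [MeasurableSpace Y]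
    (μ : Measure X) (ν : Measure Y) (c : X × Y → ℝ) : Set ℝ :=
  {r | ∃ (f : X → ℝ) (g : Y → ℝ), Integrable f μ ∧ Integrable g ν ∧
    (∀ x y, f x + g y ≤ c (x, y)) ∧ r = ∫ x, f x ∂μ + ∫ y, g y ∂ν}

/-- Values `μ(f) + ν(g)` with `f ∈ L¹(μ)`, `g ∈ L¹(ν)` and `f + g ≥ c` pointwise. -/
def dualUpperSet [MeasurableSpace X] [MeasurableSpace Y]
    (μ : Measure X) (ν : Measure Y) (c : X × Y → ℝ) : Set ℝ :=
  {r | ∃ (f : X → ℝ) (g : Y → ℝ), Integrable f μ ∧ Integrable g ν ∧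
    (∀ x y, c (x, y) ≤ f x + g y) ∧ r = ∫ x, f x ∂μ + ∫ y, g y ∂ν}

/-- `β(c) = sup {μ(f)+ν(g) : f + g ≤ c}`. -/
def betaSup [MeasurableSpace X] [MeasurableSpace Y]
    (μ : Measure X) (ν : Measure Y) (c : X × Y → ℝ) : ℝ :=
  sSup (dualLowerSet μ ν c)

/-- `β*(c) = inf {μ(f)+ν(g) : f + g ≥ c}`. -/
def betaInf [MeasurableSpace X] [MeasurableSpace Y]
    (μ : Measure X) (ν : Measure Y) (c : X × Y → ℝ) : ℝ :=
  sInf (dualUpperSet μ ν c)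

/-- Condition (1.1): `f₁ + g₁ ≤ c ≤ f₂ + g₂` with `f₁, f₂ ∈ L¹(μ)`, `g₁, g₂ ∈ L¹(ν)`. -/
def HasIntegrableBounds [MeasurableSpace X] [MeasurableSpace Y]
    (μ : Measure X) (ν : Measure Y) (c : X × Y → ℝ) : Prop :=
  ∃ (f₁ f₂ : X → ℝ) (g₁ g₂ : Y → ℝ), Integrable f₁ μ ∧ Integrable f₂ μ ∧
    Integrable g₁ ν ∧ Integrable g₂ ν ∧
    ∀ x y, f₁ x + g₁ y ≤ c (x, y) ∧ c (x, y) ≤ f₂ x + g₂ y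

/-- Real-valued indicator of a set. -/
def indR (H : Set (X × Y)) : X × Y → ℝ := H.indicator fun _ => (1 : ℝ)

/-- `R` is a finite union of measurable rectangles, i.e. an element of the ring
generated by the measurable rectangles. -/
def IsRectUnion [MeasurableSpace X] [MeasurableSpace Y] (R : Set (X × Y)) : Prop :=
  ∃ (n : ℕ) (A : Fin n → Set X) (B : Fin n → Set Y),
    (∀ i, MeasurableSet (A i)) ∧ (∀ i, MeasurableSet (B i)) ∧ R = ⋃ i, A i ×ˢ B i

/-!
Weak duality `β ≤ α` holds for every measurable `H`. For the converse, approximate `H` by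
`Hₘ = ⋃ i < m, Aᵢ × Bᵢ`. The sets `Aᵢ`, `Bᵢ` (`i < m`) cut `X` and `Y` into finitely
many cells, and `1_{Hₘ}` is constant on products of cells, so the problem for `Hₘ` is a discrete
transport problem. A max-flow argument gives a plan `π` between the cell masses whose mass on
`Hₘ` is at most `p(U) - q(N(U))` for some set `U` of cells of `X`, where `N(U)` consists of the
cells `c'` of `Y` such that `c × c'` misses `Hₘ` for some `c ∈ U`. Lifting `π` to a coupling `P` and `U` to the dual pair `(1_{U}, -1_{N(U)})` gives
`α(1_H) ≤ P(H) ≤ P(Hₘ) + P(H \ Hₘ) ≤ β(1_H) + P(H \ Hₘ)`. Finally every coupling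
satisfies `P(H \ Hₘ) ≤ min (μ (⋃ k ≥ m, Aₖ)) (ν (⋃ k ≥ m, Bₖ))`, and one of these tails
tends to `μ (limsup A) = 0` or `ν (limsup B) = 0`.
-/

open scoped ENNReal
open ProbabilityTheory

section TransportPlan

variable {S T : Type*}

def singleMass [DecidableEq S] [DecidableEq T] (s : S) (t : T) (ε : ℝ) : S → T → ℝ :=
  fun a b => if a = s ∧ b = t then ε else 0

section SingleMass

variable [DecidableEq S] [DecidableEq T] (s : S) (t : T) (ε : ℝ)

@[simp] lemma sum_singleMass_left [Fintype T] (a : S) :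
    ∑ b, singleMass s t ε a b = if a = s then ε else 0 := by
  by_cases h : a = s <;> simp [singleMass, h]

@[simp] lemma sum_singleMass_right [Fintype S] (b : T) :
    ∑ a, singleMass s t ε a b = if b = t then ε else 0 := by
  by_cases h : b = t <;> simp [singleMass, h]

end SingleMass

variable [Fintype S] [Fintype T] (p : S → ℝ) (q : T → ℝ) (good : S → T → Prop)

structure IsFlow (w : S → T → ℝ) : Prop where
  nonneg : ∀ s t, 0 ≤ w s t
  eq_zero_of_not_good : ∀ s t, ¬ good s t → w s t = 0
  sum_row_le : ∀ s, ∑ t, w s t ≤ p s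
  sum_col_le : ∀ t, ∑ s, w s t ≤ q t

def IsMaxFlow (w : S → T → ℝ) : Prop :=
  IsFlow p q good w ∧ ∀ w', IsFlow p q good w' → ∑ s, ∑ t, w' s t ≤ ∑ s, ∑ t, w s t

variable {p q good}

lemma IsFlow.add_singleMass [DecidableEq S] [DecidableEq T] {w : S → T → ℝ}
    (hw : IsFlow p q good w) {s : S} {t : T} (hst : good s t) {ε : ℝ} (hε : 0 ≤ ε)
    (hεp : ε ≤ p s - ∑ b, w s b) (hεq : ε ≤ q t - ∑ a, w a t) :
    IsFlow p q good (w + singleMass s t ε) where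
  nonneg a b := by
    have := hw.nonneg a b
    simp only [Pi.add_apply, singleMass]
    split_ifs <;> linarith
  eq_zero_of_not_good a b hab := by
    have : ¬ (a = s ∧ b = t) := by rintro ⟨rfl, rfl⟩; exact hab hst
    simp [singleMass, hw.eq_zero_of_not_good a b hab, this]
  sum_row_le a := by
    simp only [Pi.add_apply, Finset.sum_add_distrib, sum_singleMass_left]
    have := hw.sum_row_le a
    split_ifs with h
    · subst h; linarith
    · linarith
  sum_col_le b := by
    simp only [Pi.add_apply, Finset.sum_add_distrib, sum_singleMass_right]
    have := hw.sum_col_le b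
    split_ifs with h
    · subst h; linarith
    · linarith

lemma IsFlow.reroute [DecidableEq S] [DecidableEq T] {w : S → T → ℝ}
    (hw : IsFlow p q good w) {s : S} {t t₁ : T} (hst : good s t) {ε : ℝ} (hε : 0 ≤ ε)
    (hεw : ε ≤ w s t₁) (hεq : ε ≤ q t - ∑ a, w a t) :
    IsFlow p q good (w + singleMass s t ε - singleMass s t₁ ε) where
  nonneg a b := by
    have := hw.nonneg a b
    by_cases h : a = s ∧ b = t₁
    · obtain ⟨rfl, rfl⟩ := h
      simp only [Pi.add_apply, Pi.sub_apply, singleMass]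
      split_ifs <;> linarith
    · simp only [Pi.add_apply, Pi.sub_apply, singleMass, if_neg h]
      split_ifs <;> linarith
  eq_zero_of_not_good a b hab := by
    have : ¬ (a = s ∧ b = t) := by rintro ⟨rfl, rfl⟩; exact hab hst
    simp only [Pi.add_apply, Pi.sub_apply, singleMass, hw.eq_zero_of_not_good a b hab, if_neg this]
    split_ifs with h
    · obtain ⟨rfl, rfl⟩ := h
      linarith [hw.eq_zero_of_not_good a b hab]
    · simp
  sum_row_le a := by
    simp only [Pi.add_apply, Pi.sub_apply, Finset.sum_add_distrib, Finset.sum_sub_distrib,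
      sum_singleMass_left, add_sub_cancel_right]
    exact hw.sum_row_le a
  sum_col_le b := by
    simp only [Pi.add_apply, Pi.sub_apply, Finset.sum_add_distrib, Finset.sum_sub_distrib,
      sum_singleMass_right]
    have := hw.sum_col_le b
    split_ifs <;> subst_vars <;> linarith

lemma isClosed_setOf_isFlow : IsClosed {w : S → T → ℝ | IsFlow p q good w} := by
  have : {w : S → T → ℝ | IsFlow p q good w} =
      (⋂ (s) (t), {w | 0 ≤ w s t}) ∩ (⋂ (s) (t) (_ : ¬ good s t), {w | w s t = 0}) ∩
        (⋂ s, {w | ∑ t, w s t ≤ p s}) ∩ ⋂ t, {w | ∑ s, w s t ≤ q t} := by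
    ext w
    simp only [Set.mem_ofPred_eq, Set.mem_inter_iff, Set.mem_iInter]
    exact ⟨fun h => ⟨⟨⟨h.1, h.2⟩, h.3⟩, h.4⟩,
      fun h => ⟨h.1.1.1, h.1.1.2, h.1.2, h.2⟩⟩
  rw [this]
  refine .inter (.inter (.inter ?_ ?_) ?_) ?_ <;>
    refine isClosed_iInter fun _ => ?_
  · exact isClosed_iInter fun _ => isClosed_le continuous_const (by fun_prop)
  · exact isClosed_iInter fun _ => isClosed_iInter fun _ =>
      isClosed_eq (by fun_prop) continuous_const
  · exact isClosed_le (by fun_prop) continuous_const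
  · exact isClosed_le (by fun_prop) continuous_const

lemma exists_isMaxFlow (hp : ∀ s, 0 ≤ p s) (hq : ∀ t, 0 ≤ q t) :
    ∃ w, IsMaxFlow p q good w := by
  have hbdd : {w : S → T → ℝ | IsFlow p q good w} ⊆
      Set.univ.pi fun s => Set.univ.pi fun _ => Set.Icc 0 (p s) :=
    fun w hw s _ t _ => ⟨hw.nonneg s t, (Finset.single_le_sum (fun t _ => hw.nonneg s t)
      (Finset.mem_univ t)).trans (hw.sum_row_le s)⟩
  have hcompact : IsCompact {w : S → T → ℝ | IsFlow p q good w} :=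
    (isCompact_univ_pi fun _ => isCompact_univ_pi fun _ => isCompact_Icc).of_isClosed_subset
      isClosed_setOf_isFlow hbdd
  have hzero : IsFlow p q good 0 :=
    ⟨fun _ _ => le_rfl, fun _ _ _ => rfl, by simpa using hp, by simpa using hq⟩
  have hvalue : Continuous fun w : S → T → ℝ => ∑ s, ∑ t, w s t := by fun_prop
  obtain ⟨w, hw, hmax⟩ := hcompact.exists_isMaxOn ⟨0, hzero⟩ hvalue.continuousOn
  exact ⟨w, hw, fun w' hw' => hmax hw'⟩

variable (p good) in
/-- `ReachableIn p good w k s`: some row with spare capacity reaches the row `s` by an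
alternating path with `k` returns, going forward along good pairs and back along pairs
carrying positive flow. -/
inductive ReachableIn (w : S → T → ℝ) : ℕ → S → Prop
  | deficient {s : S} : ∑ t, w s t < p s → ReachableIn w 0 s
  | step {k : ℕ} {s s' : S} {t : T} : ReachableIn w k s → good s t → 0 < w s' t →
      ReachableIn w (k + 1) s'

omit [Fintype S] in
lemma ReachableIn.mono {w w' : S → T → ℝ} (hrow : ∀ s, ∑ t, w' s t = ∑ t, w s t)
    (hpos : ∀ s t, 0 < w s t → 0 < w' s t) {k : ℕ} {s : S} (h : ReachableIn p good w k s) :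
    ReachableIn p good w' k s := by
  induction h with
  | deficient h => exact .deficient (hrow _ ▸ h)
  | step _ hgood hw ih => exact ih.step hgood (hpos _ _ hw)

lemma IsMaxFlow.sum_col_eq_of_sum_row_lt {w : S → T → ℝ} (hw : IsMaxFlow p q good w) {s : S}
    {t : T} (hs : ∑ b, w s b < p s) (hst : good s t) : ∑ a, w a t = q t := by
  classical
  by_contra hne
  have ht : ∑ a, w a t < q t := lt_of_le_of_ne (hw.1.sum_col_le t) hne
  set ε := min (p s - ∑ b, w s b) (q t - ∑ a, w a t)
  have hε : 0 < ε := lt_min (by linarith) (by linarith)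
  have := hw.2 _ (hw.1.add_singleMass hst hε.le (min_le_left _ _) (min_le_right _ _))
  simp only [Pi.add_apply, Finset.sum_add_distrib, sum_singleMass_left, Finset.sum_ite_eq',
    Finset.mem_univ, if_true] at this
  linarith

lemma IsMaxFlow.exists_reroute {w : S → T → ℝ} (hw : IsMaxFlow p q good w) {s : S}
    {t t₁ : T} (hst : good s t) (ht : ∑ a, w a t < q t) (hpos : 0 < w s t₁)
    (htt₁ : t ≠ t₁) :
    ∃ w', IsMaxFlow p q good w' ∧ (∀ a, ∑ b, w' a b = ∑ b, w a b) ∧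
      (∀ a b, 0 < w a b → 0 < w' a b) ∧ ∑ a, w' a t₁ < q t₁ := by
  classical
  set ε := min (w s t₁ / 2) (q t - ∑ a, w a t)
  have hε : 0 < ε := lt_min (by linarith) (by linarith)
  have hεw : ε ≤ w s t₁ / 2 := min_le_left _ _
  set w' := w + singleMass s t ε - singleMass s t₁ ε
  have hrow : ∀ a, ∑ b, w' a b = ∑ b, w a b := fun a => by
    simp [w', Finset.sum_add_distrib, Finset.sum_sub_distrib]
  refine ⟨w', ⟨hw.1.reroute hst hε.le (by linarith) (min_le_right _ _), fun w'' hw'' => ?_⟩,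
    hrow, fun a b hab => ?_, ?_⟩
  · rw [Finset.sum_congr rfl fun a _ => hrow a]
    exact hw.2 w'' hw''
  · by_cases h : a = s ∧ b = t₁
    · obtain ⟨rfl, rfl⟩ := h
      simp only [w', Pi.add_apply, Pi.sub_apply, singleMass]
      split_ifs <;> linarith
    · simp only [w', Pi.add_apply, Pi.sub_apply, singleMass, if_neg h]
      split_ifs <;> linarith
  · simp only [w', Pi.add_apply, Pi.sub_apply, Finset.sum_add_distrib, Finset.sum_sub_distrib,
      sum_singleMass_right, if_neg htt₁.symm, if_true]
    linarith [hw.1.sum_col_le t₁]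

/-- No augmenting path: otherwise flow could be pushed along the alternating path to `t`. -/
lemma IsMaxFlow.sum_col_eq_of_reachableIn {k : ℕ} {w : S → T → ℝ} {s : S} {t : T}
    (hw : IsMaxFlow p q good w) (hs : ReachableIn p good w k s) (hst : good s t) :
    ∑ a, w a t = q t := by
  induction k generalizing w s t with
  | zero => cases hs with | deficient h => exact hw.sum_col_eq_of_sum_row_lt h hst
  | succ k ih =>
    obtain ⟨s₀, t₁, hs₀, hs₀t₁, hpos⟩ :
        ∃ s₀ t₁, ReachableIn p good w k s₀ ∧ good s₀ t₁ ∧ 0 < w s t₁ := by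
      cases hs with | step h hgood hpos => exact ⟨_, _, h, hgood, hpos⟩
    by_cases htt₁ : t = t₁
    · exact htt₁ ▸ ih hw hs₀ hs₀t₁
    by_contra hne
    obtain ⟨w', hw', hrow, hpos', ht₁⟩ :=
      hw.exists_reroute hst (lt_of_le_of_ne (hw.1.sum_col_le t) hne) hpos htt₁
    exact ht₁.ne (ih hw' (hs₀.mono hrow hpos') hs₀t₁)

lemma IsMaxFlow.exists_cut [DecidableRel good] {w : S → T → ℝ} (hw : IsMaxFlow p q good w) :
    ∃ U : Finset S, ∑ s, p s - ∑ s, ∑ t, w s t ≤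
      ∑ s ∈ U, p s - ∑ t with ∃ s ∈ U, good s t, q t := by
  classical
  set U : Finset S := {s | ∃ k, ReachableIn p good w k s}
  set N : Finset T := {t | ∃ s ∈ U, good s t}
  have hU : ∀ s, s ∈ U ↔ ∃ k, ReachableIn p good w k s := by simp [U]
  have hrow : ∀ s ∉ U, ∑ t, w s t = p s := fun s hs =>
    (hw.1.sum_row_le s).eq_of_not_lt fun hlt => hs ((hU s).2 ⟨0, .deficient hlt⟩)
  have hcol : ∀ t ∈ N, ∑ s ∈ U, w s t = q t := by
    intro t ht
    obtain ⟨s, hs, hst⟩ : ∃ s ∈ U, good s t := by simpa [N] using ht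
    obtain ⟨k, hk⟩ := (hU s).1 hs
    rw [← hw.sum_col_eq_of_reachableIn hk hst]
    refine Finset.sum_subset (Finset.subset_univ U) fun s' _ hs' => ?_
    exact (hw.1.nonneg s' t).eq_of_not_lt' fun hpos =>
      hs' ((hU s').2 ⟨k + 1, hk.step hst hpos⟩)
  refine ⟨U, ?_⟩
  calc ∑ s, p s - ∑ s, ∑ t, w s t = ∑ s ∈ U, (p s - ∑ t, w s t) := by
        rw [← Finset.sum_sub_distrib, ← Finset.sum_subset (Finset.subset_univ U)]
        exact fun s _ hs => sub_eq_zero.2 (hrow s hs).symm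
    _ ≤ ∑ s ∈ U, p s - ∑ t ∈ N, q t := by
        rw [Finset.sum_sub_distrib, ← Finset.sum_congr rfl hcol, Finset.sum_comm (s := N)]
        refine sub_le_sub_left (Finset.sum_le_sum fun s _ => ?_) _
        exact Finset.sum_le_sum_of_subset_of_nonneg (Finset.subset_univ N) fun t _ _ =>
          hw.1.nonneg s t

variable (p q) in
structure IsTransportPlan (π : S → T → ℝ) : Prop where
  nonneg : ∀ s t, 0 ≤ π s t
  sum_row : ∀ s, ∑ t, π s t = p s
  sum_col : ∀ t, ∑ s, π s t = q t

lemma IsFlow.exists_isTransportPlan [DecidableRel good] {w : S → T → ℝ}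
    (hw : IsFlow p q good w) (hpq : ∑ s, p s = ∑ t, q t) :
    ∃ π, IsTransportPlan p q π ∧
      ∑ s, ∑ t with ¬ good s t, π s t ≤ ∑ s, p s - ∑ s, ∑ t, w s t := by
  set r : S → ℝ := fun s => p s - ∑ t, w s t
  set c : T → ℝ := fun t => q t - ∑ s, w s t
  set D := ∑ s, p s - ∑ s, ∑ t, w s t
  have hr : ∀ s, 0 ≤ r s := fun s => sub_nonneg.2 (hw.sum_row_le s)
  have hc : ∀ t, 0 ≤ c t := fun t => sub_nonneg.2 (hw.sum_col_le t)
  have hrD : ∑ s, r s = D := Finset.sum_sub_distrib ..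
  have hcD : ∑ t, c t = D := by
    rw [Finset.sum_sub_distrib, ← hpq, Finset.sum_comm]
  have hD : 0 ≤ D := hrD ▸ Finset.sum_nonneg fun s _ => hr s
  have hcancel : ∀ x, 0 ≤ x → x ≤ D → x * D / D = x := fun x hx hxD => by
    rcases eq_or_ne D 0 with h | h
    · simp [h, le_antisymm (h ▸ hxD) hx]
    · field_simp
  refine ⟨fun s t => w s t + r s * c t / D, ⟨fun s t => ?_, fun s => ?_, fun t => ?_⟩, ?_⟩
  · have := hw.nonneg s t; have := hr s; have := hc t; positivity
  · rw [Finset.sum_add_distrib, ← Finset.sum_div, ← Finset.mul_sum, hcD,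
      hcancel _ (hr s) (hrD ▸ Finset.single_le_sum (fun s _ => hr s) (Finset.mem_univ s))]
    ring
  · rw [Finset.sum_add_distrib, ← Finset.sum_div, ← Finset.sum_mul, hrD, mul_comm,
      hcancel _ (hc t) (hcD ▸ Finset.single_le_sum (fun t _ => hc t) (Finset.mem_univ t))]
    ring
  · calc ∑ s, ∑ t with ¬ good s t, (w s t + r s * c t / D)
        = ∑ s, ∑ t with ¬ good s t, r s * c t / D := by
          refine Finset.sum_congr rfl fun s _ => Finset.sum_congr rfl fun t ht => ?_
          rw [hw.eq_zero_of_not_good s t (Finset.mem_filter.1 ht).2, zero_add]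
      _ ≤ ∑ s, ∑ t, r s * c t / D :=
          Finset.sum_le_sum fun s _ => Finset.sum_le_sum_of_subset_of_nonneg
            (Finset.filter_subset _ _) fun t _ _ => by have := hr s; have := hc t; positivity
      _ = D := by
          simp_rw [← Finset.sum_div, ← Finset.mul_sum, ← Finset.sum_mul, hrD, hcD,
            mul_self_div_self]

theorem exists_isTransportPlan_le_cut [DecidableRel good] (hp : ∀ s, 0 ≤ p s)
    (hq : ∀ t, 0 ≤ q t) (hpq : ∑ s, p s = ∑ t, q t) :
    ∃ π, IsTransportPlan p q π ∧ ∃ U : Finset S, ∑ s, ∑ t with ¬ good s t, π s t ≤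
      ∑ s ∈ U, p s - ∑ t with ∃ s ∈ U, good s t, q t := by
  obtain ⟨w, hw⟩ := exists_isMaxFlow (good := good) hp hq
  obtain ⟨π, hπ, hbad⟩ := hw.1.exists_isTransportPlan hpq
  obtain ⟨U, hU⟩ := hw.exists_cut
  exact ⟨π, hπ, U, hbad.trans hU⟩

end TransportPlan

lemma mul_cond_of_subset {Ω : Type*} [MeasurableSpace Ω] {m : Measure Ω} [IsFiniteMeasure m]
    {s t : Set Ω} (hs : MeasurableSet s) (hst : s ⊆ t) {c : ℝ≥0∞} (hc : c ≤ m s) :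
    c * m[t | s] = c := by
  rcases eq_or_ne (m s) 0 with h | h
  · simp [le_zero_iff.1 (h ▸ hc)]
  · rw [cond_apply hs, Set.inter_eq_left.2 hst, ENNReal.inv_mul_cancel h (measure_ne_top _ _),
      mul_one]

lemma cond_preimage_singleton_of_ne {Ω S : Type*} [MeasurableSpace Ω] {m : Measure Ω}
    {f : Ω → S} {s s' : S} (hs : MeasurableSet (f ⁻¹' {s})) (h : s ≠ s') :
    m[f ⁻¹' {s'} | f ⁻¹' {s}] = 0 := by
  rw [cond_apply hs, ((Set.disjoint_singleton.2 h).preimage f).inter_eq, measure_empty, mul_zero]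

lemma sum_measure_preimage_singleton_inter {Ω S : Type*} [MeasurableSpace Ω] [Fintype S]
    {f : Ω → S} (hf : ∀ s, MeasurableSet (f ⁻¹' {s})) (m : Measure Ω) (E : Set Ω) :
    ∑ s, m (f ⁻¹' {s} ∩ E) = m E := by
  simp_rw [← Measure.restrict_apply (hf _)]
  rw [sum_measure_preimage_singleton _ fun s _ => hf s, Finset.coe_univ, Set.preimage_univ,
    Measure.restrict_apply_univ]

section Coupling

variable [MeasurableSpace X] [MeasurableSpace Y] {μ : Measure X} {ν : Measure Y}

theorem exists_isCoupling_of_cell_masses [IsProbabilityMeasure μ] [IsProbabilityMeasure ν]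
    {S T : Type*} [Fintype S] [Fintype T] {f : X → S} {g : Y → T}
    (hf : ∀ s, MeasurableSet (f ⁻¹' {s})) (hg : ∀ t, MeasurableSet (g ⁻¹' {t}))
    (w : S → T → ℝ≥0∞) (hrow : ∀ s, ∑ t, w s t = μ (f ⁻¹' {s}))
    (hcol : ∀ t, ∑ s, w s t = ν (g ⁻¹' {t})) :
    ∃ P, IsCoupling μ ν P ∧ ∀ s t, P ((f ⁻¹' {s}) ×ˢ (g ⁻¹' {t})) = w s t := by
  set P : Measure (X × Y) := ∑ s, ∑ t, w s t • (μ[|f ⁻¹' {s}]).prod (ν[|g ⁻¹' {t}])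
  have hle_row : ∀ s t, w s t ≤ μ (f ⁻¹' {s}) := fun s t =>
    hrow s ▸ Finset.single_le_sum (f := w s) (fun _ _ => zero_le) (Finset.mem_univ t)
  have hle_col : ∀ s t, w s t ≤ ν (g ⁻¹' {t}) := fun s t =>
    hcol t ▸ Finset.single_le_sum (f := (w · t)) (fun _ _ => zero_le) (Finset.mem_univ s)
  have hP : ∀ E F,
      P (E ×ˢ F) = ∑ s, ∑ t, w s t * μ[E | f ⁻¹' {s}] * ν[F | g ⁻¹' {t}] := by
    intro E F
    simp [P, Measure.finsetSum_apply, Measure.prod_prod, mul_assoc]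
  have hfst : P.map Prod.fst = μ := by
    ext E hE
    rw [Measure.map_apply measurable_fst hE, ← Set.prod_univ, hP]
    simp_rw [mul_right_comm _ _ (ν[_|_]), mul_cond_of_subset (hg _) (Set.subset_univ _)
      (hle_col _ _), ← Finset.sum_mul, hrow, mul_comm (μ _), cond_mul_eq_inter (hf _)]
    exact sum_measure_preimage_singleton_inter hf μ E
  have hsnd : P.map Prod.snd = ν := by
    ext F hF
    rw [Measure.map_apply measurable_snd hF, ← Set.univ_prod, hP, Finset.sum_comm]
    simp_rw [mul_cond_of_subset (hf _) (Set.subset_univ _) (hle_row _ _), ← Finset.sum_mul, hcol,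
      mul_comm (ν _), cond_mul_eq_inter (hg _)]
    exact sum_measure_preimage_singleton_inter hg ν F
  have hprob : IsProbabilityMeasure P := ⟨by
    rw [← Set.preimage_univ (f := Prod.fst), ← Measure.map_apply measurable_fst .univ, hfst,
      measure_univ]⟩
  refine ⟨P, ⟨hprob, hfst, hsnd⟩, fun s t => ?_⟩
  rw [hP, Finset.sum_eq_single s (fun s' _ hs' => Finset.sum_eq_zero fun t' _ => by
      rw [cond_preimage_singleton_of_ne (hf s') hs', mul_zero, zero_mul]) (by simp),
    Finset.sum_eq_single t (fun t' _ ht' => by rw [cond_preimage_singleton_of_ne (hg t') ht',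
      mul_zero]) (by simp), mul_cond_of_subset (hf s) subset_rfl (hle_row s t),
    mul_cond_of_subset (hg t) subset_rfl (hle_col s t)]

end Coupling

lemma indR_nonneg (H : Set (X × Y)) (z : X × Y) : 0 ≤ indR H z :=
  Set.indicator_nonneg (fun _ _ => zero_le_one) z

section Duality

variable [MeasurableSpace X] [MeasurableSpace Y] {μ : Measure X} {ν : Measure Y}

lemma IsCoupling.integral_add_le {P : Measure (X × Y)} (hP : IsCoupling μ ν P)
    {c : X × Y → ℝ} (hc : Integrable c P) {f : X → ℝ} {g : Y → ℝ}
    (hf : Integrable f μ) (hg : Integrable g ν) (hfg : ∀ x y, f x + g y ≤ c (x, y)) :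
    ∫ x, f x ∂μ + ∫ y, g y ∂ν ≤ ∫ z, c z ∂P := by
  obtain ⟨-, hfst, hsnd⟩ := hP
  subst hfst hsnd
  have hf' : Integrable (fun z : X × Y => f z.1) P := hf.comp_measurable measurable_fst
  have hg' : Integrable (fun z : X × Y => g z.2) P := hg.comp_measurable measurable_snd
  rw [integral_map measurable_fst.aemeasurable hf.1, integral_map measurable_snd.aemeasurable hg.1,
    ← integral_add hf' hg']
  exact integral_mono (hf'.add hg') hc fun z => hfg z.1 z.2

lemma IsCoupling.measure_preimage_fst {P : Measure (X × Y)} (hP : IsCoupling μ ν P) {E : Set X}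
    (hE : MeasurableSet E) : P (Prod.fst ⁻¹' E) = μ E := by
  rw [← Measure.map_apply measurable_fst hE, hP.2.1]

lemma IsCoupling.measure_preimage_snd {P : Measure (X × Y)} (hP : IsCoupling μ ν P) {F : Set Y}
    (hF : MeasurableSet F) : P (Prod.snd ⁻¹' F) = ν F := by
  rw [← Measure.map_apply measurable_snd hF, hP.2.2]

lemma isCoupling_prod [IsProbabilityMeasure μ] [IsProbabilityMeasure ν] :
    IsCoupling μ ν (μ.prod ν) :=
  ⟨inferInstance, by simp, by simp⟩

lemma integrable_indR {P : Measure (X × Y)} [IsFiniteMeasure P] {H : Set (X × Y)}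
    (hH : MeasurableSet H) : Integrable (indR H) P :=
  (integrable_const 1).indicator hH

lemma integral_indR {P : Measure (X × Y)} {H : Set (X × Y)} (hH : MeasurableSet H) :
    ∫ z, indR H z ∂P = P.real H := by
  simp [indR, integral_indicator_const _ hH]

lemma mem_dualLowerSet_of_le {c c' : X × Y → ℝ} (hcc' : c ≤ c') {r : ℝ}
    (hr : r ∈ dualLowerSet μ ν c) : r ∈ dualLowerSet μ ν c' := by
  obtain ⟨f, g, hf, hg, hfg, rfl⟩ := hr
  exact ⟨f, g, hf, hg, fun x y => (hfg x y).trans (hcc' _), rfl⟩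

lemma alphaInf_indR_le {P : Measure (X × Y)} (hP : IsCoupling μ ν P) {H : Set (X × Y)}
    (hH : MeasurableSet H) : alphaInf μ ν (indR H) ≤ P.real H := by
  refine csInf_le ⟨0, ?_⟩ ⟨P, hP, (integral_indR hH).symm⟩
  rintro _ ⟨P', -, rfl⟩
  exact integral_nonneg (indR_nonneg H)

variable [IsProbabilityMeasure μ] [IsProbabilityMeasure ν] {H : Set (X × Y)}

lemma le_betaSup_indR (hH : MeasurableSet H) {r : ℝ} (hr : r ∈ dualLowerSet μ ν (indR H)) :
    r ≤ betaSup μ ν (indR H) := by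
  refine le_csSup ⟨∫ z, indR H z ∂(μ.prod ν), ?_⟩ hr
  rintro _ ⟨f, g, hf, hg, hfg, rfl⟩
  exact isCoupling_prod.integral_add_le (integrable_indR hH) hf hg hfg

lemma betaSup_indR_le_alphaInf (hH : MeasurableSet H) :
    betaSup μ ν (indR H) ≤ alphaInf μ ν (indR H) := by
  have hzero : (0 : ℝ) ∈ dualLowerSet μ ν (indR H) :=
    ⟨0, 0, integrable_zero .., integrable_zero .., fun _ _ => by
      simpa using indR_nonneg H _, by simp⟩
  refine csSup_le ⟨0, hzero⟩ fun r hr => le_csInf ⟨_, μ.prod ν, isCoupling_prod, rfl⟩ ?_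
  rintro _ ⟨P, hP, rfl⟩
  obtain ⟨f, g, hf, hg, hfg, rfl⟩ := hr
  have := hP.1
  exact hP.integral_add_le (integrable_indR hH) hf hg hfg

end Duality

section FiniteUnion

variable [MeasurableSpace X] [MeasurableSpace Y] {μ : Measure X} {ν : Measure Y}
  [IsProbabilityMeasure μ] [IsProbabilityMeasure ν]

lemma measurableSet_preimage_of_fibers {Ω S : Type*} [MeasurableSpace Ω] [Finite S]
    {f : Ω → S} (hf : ∀ s, MeasurableSet (f ⁻¹' {s})) (A : Set S) :
    MeasurableSet (f ⁻¹' A) :=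
  Set.biUnion_preimage_singleton f A ▸ .biUnion A.to_countable fun s _ => hf s

lemma measureReal_sub_measureReal_mem_dualLowerSet {S T : Type*} [Finite S] [Finite T]
    {f : X → S} {g : Y → T} (hf : ∀ s, MeasurableSet (f ⁻¹' {s}))
    (hg : ∀ t, MeasurableSet (g ⁻¹' {t})) (good : S → T → Prop) (U : Set S) :
    μ.real (f ⁻¹' U) - ν.real (g ⁻¹' {t | ∃ s ∈ U, good s t}) ∈
      dualLowerSet μ ν (indR {z | ¬ good (f z.1) (g z.2)}) := by
  set N := {t | ∃ s ∈ U, good s t}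
  have hfU := measurableSet_preimage_of_fibers hf U
  have hgN := measurableSet_preimage_of_fibers hg N
  refine ⟨(f ⁻¹' U).indicator fun _ => 1, fun y => -(g ⁻¹' N).indicator (fun _ => 1) y,
    (integrable_const 1).indicator hfU, ((integrable_const 1).indicator hgN).neg,
    fun x y => ?_, ?_⟩
  · have h0 := indR_nonneg {z | ¬ good (f z.1) (g z.2)} (x, y)
    by_cases hx : f x ∈ U
    · by_cases hy : g y ∈ N
      · simpa [hx, hy] using h0
      · have : ¬ good (f x) (g y) := fun h => hy ⟨f x, hx, h⟩
        simp [hx, hy, indR, this]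
    · have : 0 ≤ (g ⁻¹' N).indicator (fun _ => (1 : ℝ)) y :=
        Set.indicator_nonneg (fun _ _ => zero_le_one) y
      simp only [Set.indicator_of_notMem (show x ∉ f ⁻¹' U from hx)]
      linarith
  · rw [integral_indicator_const _ hfU, integral_neg, integral_indicator_const _ hgN]
    simp [sub_eq_add_neg]

theorem exists_isCoupling_measureReal_le_of_fibers {S T : Type*} [Fintype S] [Fintype T]
    {f : X → S} {g : Y → T} (hf : ∀ s, MeasurableSet (f ⁻¹' {s}))
    (hg : ∀ t, MeasurableSet (g ⁻¹' {t})) (good : S → T → Prop) :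
    ∃ P, IsCoupling μ ν P ∧ ∃ r ∈ dualLowerSet μ ν (indR {z | ¬ good (f z.1) (g z.2)}),
      P.real {z | ¬ good (f z.1) (g z.2)} ≤ r := by
  classical
  have hpq : ∑ s, μ.real (f ⁻¹' {s}) = ∑ t, ν.real (g ⁻¹' {t}) := by
    rw [sum_measureReal_preimage_singleton _ fun s _ => hf s,
      sum_measureReal_preimage_singleton _ fun t _ => hg t]
    simp
  obtain ⟨π, hπ, U, hU⟩ := exists_isTransportPlan_le_cut (good := good)
    (fun s => measureReal_nonneg) (fun t => measureReal_nonneg) hpq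
  obtain ⟨P, hP, hcell⟩ := exists_isCoupling_of_cell_masses hf hg (fun s t => .ofReal (π s t))
    (fun s => by rw [← ENNReal.ofReal_sum_of_nonneg fun t _ => hπ.nonneg s t, hπ.sum_row,
      ofReal_measureReal])
    (fun t => by rw [← ENNReal.ofReal_sum_of_nonneg fun s _ => hπ.nonneg s t, hπ.sum_col,
      ofReal_measureReal])
  refine ⟨P, hP, _, measureReal_sub_measureReal_mem_dualLowerSet hf hg good U, ?_⟩
  have := hP.1
  calc P.real {z | ¬ good (f z.1) (g z.2)}
      ≤ P.real (⋃ s, ⋃ t ∈ ({t | ¬ good s t} : Finset T),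
          (f ⁻¹' {s}) ×ˢ (g ⁻¹' {t})) :=
        measureReal_mono fun z hz => by simpa using hz
    _ ≤ ∑ s, ∑ t with ¬ good s t, π s t := by
        refine (measureReal_iUnion_fintype_le _).trans (Finset.sum_le_sum fun s _ =>
          (measureReal_biUnion_finset_le _ _).trans_eq (Finset.sum_congr rfl fun t _ => ?_))
        rw [measureReal_def, hcell, ENNReal.toReal_ofReal (hπ.nonneg s t)]
    _ ≤ _ := hU
    _ = _ := by
        rw [sum_measureReal_preimage_singleton _ fun s _ => hf s,
          sum_measureReal_preimage_singleton _ fun t _ => hg t]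
        simp

/-- The cells are the level sets of `x ↦ (x ∈ A i)ᵢ` and `y ↦ (y ∈ B i)ᵢ`. -/
theorem exists_isCoupling_measureReal_iUnion_prod_le {ι : Type*} [Finite ι] (A : ι → Set X)
    (B : ι → Set Y) (hA : ∀ i, MeasurableSet (A i)) (hB : ∀ i, MeasurableSet (B i)) :
    ∃ P, IsCoupling μ ν P ∧ ∃ r ∈ dualLowerSet μ ν (indR (⋃ i, A i ×ˢ B i)),
      P.real (⋃ i, A i ×ˢ B i) ≤ r := by
  classical
  have := Fintype.ofFinite ι
  have hf : Measurable fun x i => decide (x ∈ A i) :=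
    measurable_pi_lambda _ fun i => measurable_to_bool (by convert hA i; ext; simp)
  have hg : Measurable fun y i => decide (y ∈ B i) :=
    measurable_pi_lambda _ fun i => measurable_to_bool (by convert hB i; ext; simp)
  have hH : ⋃ i, A i ×ˢ B i =
      {z : X × Y | ¬ ∀ i, ¬ (decide (z.1 ∈ A i) = true ∧
        decide (z.2 ∈ B i) = true)} := by
    ext; simp
  rw [hH]
  exact exists_isCoupling_measureReal_le_of_fibers (fun s => hf (measurableSet_singleton s))
    (fun t => hg (measurableSet_singleton t)) fun s t => ∀ i, ¬ (s i = true ∧ t i = true)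

end FiniteUnion

lemma tendsto_measure_biUnion_ge_limsup {Ω : Type*} [MeasurableSpace Ω] (m : Measure Ω)
    [IsFiniteMeasure m] {A : ℕ → Set Ω} (hA : ∀ n, MeasurableSet (A n)) :
    Tendsto (fun n => m (⋃ k ≥ n, A k)) atTop (𝓝 (m (limsup A atTop))) := by
  rw [limsup_eq_iInf_iSup_of_nat]
  exact tendsto_measure_iInter_atTop (fun n => (MeasurableSet.biUnion (Set.to_countable _)
    fun k _ => hA k).nullMeasurableSet) (fun n n' hnn' => Set.biUnion_mono
      (fun k hk => le_trans hnn' hk) fun _ _ => subset_rfl) ⟨0, measure_ne_top _ _⟩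

lemma iUnion_prod_diff_subset (A : ℕ → Set X) (B : ℕ → Set Y) (m : ℕ) :
    (⋃ n, A n ×ˢ B n) \ ⋃ i : Fin m, A i ×ˢ B i ⊆
      (⋃ k ≥ m, A k) ×ˢ (⋃ k ≥ m, B k) := by
  rintro ⟨x, y⟩ ⟨hz, hzm⟩
  obtain ⟨n, hx, hy⟩ := Set.mem_iUnion.1 hz
  have hn : m ≤ n := not_lt.1 fun hn => hzm (Set.mem_iUnion.2 ⟨⟨n, hn⟩, hx, hy⟩)
  exact ⟨Set.mem_biUnion hn hx, Set.mem_biUnion hn hy⟩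

section Tail

variable [MeasurableSpace X] [MeasurableSpace Y] {μ : Measure X} {ν : Measure Y}
  [IsProbabilityMeasure μ] [IsProbabilityMeasure ν]

lemma exists_forall_isCoupling_measureReal_diff_le {A : ℕ → Set X} {B : ℕ → Set Y}
    (hA : ∀ n, MeasurableSet (A n)) (hB : ∀ n, MeasurableSet (B n))
    (hnull : μ (limsup A atTop) = 0 ∨ ν (limsup B atTop) = 0) {ε : ℝ} (hε : 0 < ε) :
    ∃ m : ℕ, ∀ P, IsCoupling μ ν P →
      P.real ((⋃ n, A n ×ˢ B n) \ ⋃ i : Fin m, A i ×ˢ B i) ≤ ε := by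
  have hε' : (0 : ℝ≥0∞) < .ofReal ε := ENNReal.ofReal_pos.2 hε
  obtain ⟨m, hm⟩ : ∃ m : ℕ, ∀ P, IsCoupling μ ν P →
      P ((⋃ k ≥ m, A k) ×ˢ (⋃ k ≥ m, B k)) ≤ .ofReal ε := by
    rcases hnull with h | h
    · obtain ⟨m, hm⟩ := ((tendsto_measure_biUnion_ge_limsup μ hA).eventually_lt_const
        (h ▸ hε')).exists
      refine ⟨m, fun P hP => (measure_mono (Set.prod_subset_preimage_fst _ _)).trans ?_⟩
      rw [hP.measure_preimage_fst (.iUnion fun k => .iUnion fun _ => hA k)]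
      exact hm.le
    · obtain ⟨m, hm⟩ := ((tendsto_measure_biUnion_ge_limsup ν hB).eventually_lt_const
        (h ▸ hε')).exists
      refine ⟨m, fun P hP => (measure_mono (Set.prod_subset_preimage_snd _ _)).trans ?_⟩
      rw [hP.measure_preimage_snd (.iUnion fun k => .iUnion fun _ => hB k)]
      exact hm.le
  refine ⟨m, fun P hP => ?_⟩
  have := hP.1
  exact ENNReal.toReal_le_of_le_ofReal hε.le
    ((measure_mono (iUnion_prod_diff_subset A B m)).trans (hm P hP))

end Tail

theorem stmt8 [MeasurableSpace X] [MeasurableSpace Y]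
    (μ : Measure X) (ν : Measure Y) [IsProbabilityMeasure μ] [IsProbabilityMeasure ν]
    (A : ℕ → Set X) (B : ℕ → Set Y)
    (hA : ∀ n, MeasurableSet (A n)) (hB : ∀ n, MeasurableSet (B n))
    (hnull : μ (Filter.limsup A Filter.atTop) = 0 ∨ ν (Filter.limsup B Filter.atTop) = 0) :
    alphaInf μ ν (indR (⋃ n, A n ×ˢ B n)) = betaSup μ ν (indR (⋃ n, A n ×ˢ B n)) := by
  set H := ⋃ n, A n ×ˢ B n
  have hH : MeasurableSet H := .iUnion fun n => (hA n).prod (hB n)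
  refine le_antisymm (le_of_forall_pos_le_add fun ε hε => ?_) (betaSup_indR_le_alphaInf hH)
  obtain ⟨m, hm⟩ := exists_forall_isCoupling_measureReal_diff_le hA hB hnull hε
  set Hm := ⋃ i : Fin m, A i ×ˢ B i
  obtain ⟨P, hP, r, hr, hPr⟩ := exists_isCoupling_measureReal_iUnion_prod_le (μ := μ)
    (ν := ν) (fun i : Fin m => A i) (fun i => B i) (fun i => hA i) (fun i => hB i)
  have hHm : Hm ⊆ H := Set.iUnion_subset fun i => Set.subset_iUnion (fun n => A n ×ˢ B n) i
  have := hP.1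
  calc alphaInf μ ν (indR H) ≤ P.real H := alphaInf_indR_le hP hH
    _ ≤ P.real (H \ Hm) + P.real Hm :=
        (measureReal_mono (Set.subset_sdiff_union H Hm)).trans (measureReal_union_le _ _)
    _ ≤ ε + r := add_le_add (hm P hP) hPr
    _ ≤ betaSup μ ν (indR H) + ε := by
        rw [add_comm]
        gcongr
        exact le_betaSup_indR hH (mem_dualLowerSet_of_le
          (Set.indicator_le_indicator_of_subset hHm fun _ => zero_le_one) hr)
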